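/- arXiv:2605.08104 — 4 statements merged into one kernel-verified Lean document; each statement's English description precedes it below -/
import Mathlib

section
/- Let μ, ν, λ be Borel probability measures on ℝ, and assume d_e(μ,ν) < ∞. Then the Cramér distance is invariant under independent additive noise: d_c(λ ∗ μ, λ ∗ ν) ≤ d_c(μ, ν), where λ ∗ μ denotes the convolution of λ and μ (the law of A + U for independent A ∼ λ, U ∼ μ). -/
open MeasureTheory ProbabilityTheory
open scoped ENNReal

/-!
The CDF of `λ ∗ μ` is the `λ`-average of the translates `x ↦ F_μ (x - a)`, so
`F_{λ∗μ} - F_{λ∗ν}` is the `λ`-average of the translates of `F = F_μ - F_ν`. By Jensen the square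
of this average is at most the average of the squares, and after exchanging the integrals
(Tonelli) each translate of `F²` has the same Lebesgue integral as `F²`.
-/

/-- The energy distance (squared Cramér distance) between two measures on `ℝ`,
as the integral of the squared difference of their cumulative distribution functions. -/
noncomputable def energyDist (μ ν : Measure ℝ) : ℝ≥0∞ :=
  ∫⁻ x, ENNReal.ofReal ((cdf μ x - cdf ν x) ^ 2)

/-- The Cramér distance between two measures on `ℝ`. -/
noncomputable def cramerDist (μ ν : Measure ℝ) : ℝ≥0∞ :=
  energyDist μ ν ^ (1 / 2 : ℝ)

theorem enorm_integral_sq_le_lintegral_enorm_sq {α E : Type*} [MeasurableSpace α]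
    [NormedAddCommGroup E] [NormedSpace ℝ E] {μ : Measure α} [IsProbabilityMeasure μ]
    {f : α → E} (hf : AEStronglyMeasurable f μ) :
    ‖∫ a, f a ∂μ‖ₑ ^ 2 ≤ ∫⁻ a, ‖f a‖ₑ ^ 2 ∂μ := by
  calc ‖∫ a, f a ∂μ‖ₑ ^ 2 ≤ eLpNorm f 1 μ ^ 2 := by
        rw [eLpNorm_one_eq_lintegral_enorm]
        gcongr
        exact enorm_integral_le_lintegral_enorm f
    _ ≤ eLpNorm f 2 μ ^ 2 := by
        gcongr
        exact eLpNorm_le_eLpNorm_of_exponent_le one_le_two hf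
    _ = ∫⁻ a, ‖f a‖ₑ ^ 2 ∂μ := by
        simpa using eLpNorm_nnreal_pow_eq_lintegral (f := f) (μ := μ) (p := 2) two_ne_zero

theorem lintegral_enorm_sq_integral_comp_sub_le {G E : Type*} [MeasurableSpace G] [AddGroup G]
    [MeasurableAdd₂ G] [MeasurableNeg G] [NormedAddCommGroup E] [NormedSpace ℝ E]
    (m : Measure G) [SFinite m] [m.IsAddRightInvariant] (lam : Measure G) [IsProbabilityMeasure lam]
    {F : G → E} (hF : StronglyMeasurable F) :
    ∫⁻ x, ‖∫ a, F (x - a) ∂lam‖ₑ ^ 2 ∂m ≤ ∫⁻ x, ‖F x‖ₑ ^ 2 ∂m := by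
  have hF_sub : StronglyMeasurable fun p : G × G => F (p.1 - p.2) :=
    hF.comp_measurable measurable_sub
  calc ∫⁻ x, ‖∫ a, F (x - a) ∂lam‖ₑ ^ 2 ∂m
      ≤ ∫⁻ x, ∫⁻ a, ‖F (x - a)‖ₑ ^ 2 ∂lam ∂m := by
        gcongr with x
        exact enorm_integral_sq_le_lintegral_enorm_sq
          (hF.comp_measurable (measurable_const.sub measurable_id)).aestronglyMeasurable
    _ = ∫⁻ a, ∫⁻ x, ‖F (x - a)‖ₑ ^ 2 ∂m ∂lam :=
        lintegral_lintegral_swap (hF_sub.enorm.pow_const 2).aemeasurable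
    _ = ∫⁻ x, ‖F x‖ₑ ^ 2 ∂m := by
        simp [lintegral_sub_right_eq_self (fun x => ‖F x‖ₑ ^ 2)]

theorem measurable_cdf (μ : Measure ℝ) : Measurable (cdf μ) :=
  (monotone_cdf μ).measurable

theorem conv_apply_Iic (lam μ : Measure ℝ) [SFinite μ] (x : ℝ) :
    (lam ∗ μ) (Set.Iic x) = ∫⁻ a, μ (Set.Iic (x - a)) ∂lam := by
  rw [Measure.conv, Measure.map_apply measurable_add measurableSet_Iic,
    Measure.prod_apply (measurable_add measurableSet_Iic)]
  congr! with a
  ext y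
  simp [le_sub_iff_add_le']

theorem cdf_conv_apply (lam μ : Measure ℝ) [IsProbabilityMeasure lam] [IsProbabilityMeasure μ]
    (x : ℝ) : cdf (lam ∗ μ) x = ∫ a, cdf μ (x - a) ∂lam := by
  rw [cdf_eq_real, measureReal_def, conv_apply_Iic, integral_eq_lintegral_of_nonneg_ae
    (.of_forall fun a => cdf_nonneg μ _)
    ((measurable_cdf μ).comp (measurable_const_sub x)).aestronglyMeasurable]
  simp_rw [ofReal_cdf]

theorem energyDist_eq_lintegral_enorm_sq (μ ν : Measure ℝ) :
    energyDist μ ν = ∫⁻ x, ‖cdf μ x - cdf ν x‖ₑ ^ 2 := by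
  simp_rw [energyDist, ← enorm_pow, Real.enorm_of_nonneg (sq_nonneg _)]

theorem energyDist_conv_le (μ ν lam : Measure ℝ)
    [IsProbabilityMeasure μ] [IsProbabilityMeasure ν] [IsProbabilityMeasure lam] :
    energyDist (lam ∗ μ) (lam ∗ ν) ≤ energyDist μ ν := by
  have hintegrable (ρ : Measure ℝ) [IsProbabilityMeasure ρ] (x : ℝ) :
      Integrable (fun a => cdf ρ (x - a)) lam :=
    .of_bound ((measurable_cdf ρ).comp (measurable_const_sub x)).aestronglyMeasurable 1
      (.of_forall fun a => by simp [abs_of_nonneg (cdf_nonneg ρ _), cdf_le_one])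
  have hconv (x : ℝ) : cdf (lam ∗ μ) x - cdf (lam ∗ ν) x =
      ∫ a, (fun y => cdf μ y - cdf ν y) (x - a) ∂lam := by
    rw [cdf_conv_apply, cdf_conv_apply, ← integral_sub (hintegrable μ x) (hintegrable ν x)]
  simp_rw [energyDist_eq_lintegral_enorm_sq, hconv]
  exact lintegral_enorm_sq_integral_comp_sub_le volume lam
    ((measurable_cdf μ).sub (measurable_cdf ν)).stronglyMeasurable

theorem cramerDist_conv_le_general (μ ν lam : Measure ℝ)
    [IsProbabilityMeasure μ] [IsProbabilityMeasure ν] [IsProbabilityMeasure lam] :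
    cramerDist (Measure.conv lam μ) (Measure.conv lam ν) ≤ cramerDist μ ν :=
  ENNReal.rpow_le_rpow (energyDist_conv_le μ ν lam) (by norm_num)

/-- The Cramér distance is invariant under independent additive noise:
`d_c(λ ∗ μ, λ ∗ ν) ≤ d_c(μ, ν)`. -/
theorem cramerDist_conv_le (μ ν lam : Measure ℝ)
    [IsProbabilityMeasure μ] [IsProbabilityMeasure ν] [IsProbabilityMeasure lam]
    (h : energyDist μ ν < ⊤) :
    cramerDist (Measure.conv lam μ) (Measure.conv lam ν) ≤ cramerDist μ ν :=
  cramerDist_conv_le_general μ ν lam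
end

section
/- Let μ, ν be Borel probability measures on ℝ and k > 0. Then the Cramér distance is scale sensitive of order 1/2: d_c((k·)_*μ, (k·)_*ν) = k^{1/2} · d_c(μ, ν), where (k·)_*μ denotes the pushforward of μ under the map x ↦ k·x (the law of kU for U ∼ μ). -/
open MeasureTheory ProbabilityTheory
open scoped ENNReal

/-! Dilating by `k > 0` turns the cdf `F` into `F (· / k)`, so the substitution `x = k y`
multiplies the energy distance by `k`, and its square root, the Cramér distance, by `√k`. -/

theorem Real.lintegral_comp_div_const (f : ℝ → ℝ≥0∞) {k : ℝ} (hk : k ≠ 0) :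
    ∫⁻ x, f (x / k) = ENNReal.ofReal |k| * ∫⁻ x, f x := by
  simp_rw [div_eq_mul_inv]
  rw [← (measurableEmbedding_mulRight₀ (inv_ne_zero hk)).lintegral_map,
    Real.map_volume_mul_right (inv_ne_zero hk), lintegral_smul_measure, inv_inv, smul_eq_mul]

theorem cdf_map_const_mul (μ : Measure ℝ) [IsProbabilityMeasure μ] {k : ℝ} (hk : 0 < k)
    (x : ℝ) : cdf (μ.map (k * ·)) x = cdf μ (x / k) := by
  have : IsProbabilityMeasure (μ.map (k * ·)) :=
    Measure.isProbabilityMeasure_map (measurable_const_mul k).aemeasurable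
  rw [cdf_eq_real, cdf_eq_real, map_measureReal_apply (measurable_const_mul k) measurableSet_Iic,
    Set.preimage_const_mul_Iic₀ x hk]

theorem energyDist_map_const_mul (μ ν : Measure ℝ) [IsProbabilityMeasure μ]
    [IsProbabilityMeasure ν] {k : ℝ} (hk : 0 < k) :
    energyDist (μ.map (k * ·)) (ν.map (k * ·)) = ENNReal.ofReal k * energyDist μ ν := by
  simp only [energyDist, cdf_map_const_mul _ hk]
  rw [Real.lintegral_comp_div_const (fun y => ENNReal.ofReal ((cdf μ y - cdf ν y) ^ 2)) hk.ne',
    abs_of_pos hk]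

/-- Scale sensitivity of order 1/2 of the Cramér distance:
`d_c((k·)_*μ, (k·)_*ν) = √k · d_c(μ, ν)` for `k > 0`. -/
theorem cramerDist_map_smul (μ ν : Measure ℝ)
    [IsProbabilityMeasure μ] [IsProbabilityMeasure ν] (k : ℝ) (hk : 0 < k) :
    cramerDist (Measure.map (fun x => k * x) μ) (Measure.map (fun x => k * x) ν) =
      ENNReal.ofReal (Real.sqrt k) * cramerDist μ ν := by
  rw [cramerDist, cramerDist, energyDist_map_const_mul μ ν hk,
    ENNReal.mul_rpow_of_nonneg _ _ (by norm_num), ENNReal.ofReal_rpow_of_pos hk,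
    Real.sqrt_eq_rpow]
end

section
/- Let S, A be finite nonempty sets, r : S × A → ℝ, P : S × A → (S → ℝ) with P(s,a)(s') ≥ 0 and ∑_{s'} P(s,a)(s') = 1, and let 0 ≤ γ < 1. Let π and π' be policies (π(s)(a) ≥ 0, ∑_a π(s)(a) = 1, likewise for π'). Suppose Qᵖ : S × A → ℝ satisfies the Bellman equation Qᵖ(s,a) = r(s,a) + γ·∑_{s'} P(s,a)(s')·∑_{a'} π(s')(a')·Qᵖ(s',a') for all (s,a), and Qᵖ' : S × A → ℝ satisfies the analogous Bellman equation for π'. If the one-step improvement condition ∑_a π'(s)(a)·Qᵖ(s,a) ≥ ∑_a π(s)(a)·Qᵖ(s,a) holds for every s ∈ S, then for every s ∈ S, ∑_a π(s)(a)·Qᵖ(s,a) ≤ ∑_a π'(s)(a)·Qᵖ'(s,a). -/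
/-- Policy improvement: if `Qᵖ` and `Qᵖ'` satisfy the Bellman equations of policies `π`
and `π'` respectively, and `π'` is a one-step improvement over `π` with respect to `Qᵖ`,
then the value of `π'` dominates the value of `π` at every state. -/
theorem policy_improvement {S A : Type*}
    [Fintype S] [Fintype A] [Nonempty S] [Nonempty A]
    (r : S × A → ℝ) (P : S × A → S → ℝ)
    (hP0 : ∀ p s', 0 ≤ P p s') (hP1 : ∀ p, ∑ s', P p s' = 1)
    (γ : ℝ) (hγ0 : 0 ≤ γ) (hγ1 : γ < 1)
    (pol pol' : S → A → ℝ)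
    (hpol0 : ∀ s a, 0 ≤ pol s a) (hpol1 : ∀ s, ∑ a, pol s a = 1)
    (hpol'0 : ∀ s a, 0 ≤ pol' s a) (hpol'1 : ∀ s, ∑ a, pol' s a = 1)
    (Qp Qp' : S × A → ℝ)
    (hQp : ∀ p : S × A, Qp p =
      r p + γ * ∑ s' : S, P p s' * ∑ a' : A, pol s' a' * Qp (s', a'))
    (hQp' : ∀ p : S × A, Qp' p =
      r p + γ * ∑ s' : S, P p s' * ∑ a' : A, pol' s' a' * Qp' (s', a'))
    (himp : ∀ s : S, ∑ a : A, pol s a * Qp (s, a) ≤ ∑ a : A, pol' s a * Qp (s, a)) :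
    ∀ s : S, ∑ a : A, pol s a * Qp (s, a) ≤ ∑ a : A, pol' s a * Qp' (s, a) := by
  set V : S → ℝ := fun s => ∑ a, pol s a * Qp (s, a) with hV
  set V' : S → ℝ := fun s => ∑ a, pol' s a * Qp' (s, a) with hV'
  set f : S → ℝ := fun s => V' s - V s with hf
  obtain ⟨s0, -, hs0⟩ := Finset.exists_min_image Finset.univ f
    ⟨Classical.arbitrary S, Finset.mem_univ _⟩
  have hs0' : ∀ s, f s0 ≤ f s := fun s => hs0 s (Finset.mem_univ s)
  -- difference of Q-functions
  have hdiff : ∀ p : S × A, Qp' p - Qp p = γ * ∑ s', P p s' * f s' := by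
    intro p
    have h : ∑ s', P p s' * f s' = (∑ s', P p s' * V' s') - ∑ s', P p s' * V s' := by
      rw [← Finset.sum_sub_distrib]
      exact Finset.sum_congr rfl fun s' _ => by simp only [hf]; ring
    rw [h, hQp' p, hQp p]
    simp only [hV, hV']
    ring
  -- key lower bound
  have key : ∀ s : S, γ * f s0 ≤ f s := by
    intro s
    have h1 : V s ≤ ∑ a, pol' s a * Qp (s, a) := himp s
    have h2 : ∑ a, pol' s a * Qp (s, a) + γ * f s0 ≤ V' s := by
      have : V' s - ∑ a, pol' s a * Qp (s, a)
          = ∑ a, pol' s a * (γ * ∑ s', P (s, a) s' * f s') := by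
        rw [hV', ← Finset.sum_sub_distrib]
        apply Finset.sum_congr rfl
        intro a _
        rw [← mul_sub, hdiff (s, a)]
      have hge : γ * f s0 ≤ ∑ a, pol' s a * (γ * ∑ s', P (s, a) s' * f s') := by
        calc γ * f s0 = ∑ a, pol' s a * (γ * f s0) := by
              rw [← Finset.sum_mul, hpol'1 s, one_mul]
          _ ≤ ∑ a, pol' s a * (γ * ∑ s', P (s, a) s' * f s') := by
              apply Finset.sum_le_sum
              intro a _
              apply mul_le_mul_of_nonneg_left _ (hpol'0 s a)
              apply mul_le_mul_of_nonneg_left _ hγ0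
              calc f s0 = ∑ s', P (s, a) s' * f s0 := by
                    rw [← Finset.sum_mul, hP1 (s, a), one_mul]
                _ ≤ ∑ s', P (s, a) s' * f s' := by
                    apply Finset.sum_le_sum
                    intro s' _
                    exact mul_le_mul_of_nonneg_left (hs0' s') (hP0 (s, a) s')
      linarith [this, hge]
    calc γ * f s0 ≤ V' s - ∑ a, pol' s a * Qp (s, a) := by linarith
      _ ≤ f s := by simp only [hf]; linarith
  have h0 : 0 ≤ f s0 := by
    have := key s0
    nlinarith
  intro s
  have : 0 ≤ f s := le_trans h0 (hs0' s)
  simpa [hf, hV, hV'] using this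
end

section
/- Let S, A be finite nonempty sets, r : S × A → ℝ, P : S × A → (S → ℝ) with P(s,a)(s') ≥ 0 and ∑_{s'} P(s,a)(s') = 1, let 0 ≤ γ < 1 and α > 0. Let π and π' be policies with strictly positive weights (π(s)(a) > 0, ∑_a π(s)(a) = 1, likewise for π'). Suppose Qₕᵖ : S × A → ℝ satisfies the soft Bellman equation Qₕᵖ(s,a) = r(s,a) + γ·∑_{s'} P(s,a)(s')·∑_{a'} π(s')(a')·(Qₕᵖ(s',a') − α·log π(s')(a')) for all (s,a), and Qₕᵖ' satisfies the analogous soft Bellman equation for π'. If the one-step soft improvement condition ∑_a π'(s)(a)·(Qₕᵖ(s,a) − α·log π'(s)(a)) ≥ ∑_a π(s)(a)·(Qₕᵖ(s,a) − α·log π(s)(a)) holds for every s ∈ S, then Qₕᵖ(s,a) ≤ Qₕᵖ'(s,a) for every (s,a) ∈ S × A. -/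
/-- Global soft policy improvement: if `Qₕᵖ` and `Qₕᵖ'` satisfy the soft Bellman
equations of policies `π` and `π'` respectively, and `π'` is a one-step soft improvement
over `π`, then `Qₕᵖ ≤ Qₕᵖ'` pointwise. -/
theorem soft_policy_improvement {S A : Type*}
    [Fintype S] [Fintype A] [Nonempty S] [Nonempty A]
    (r : S × A → ℝ) (P : S × A → S → ℝ)
    (hP0 : ∀ p s', 0 ≤ P p s') (hP1 : ∀ p, ∑ s', P p s' = 1)
    (γ α : ℝ) (hγ0 : 0 ≤ γ) (hγ1 : γ < 1) (hα : 0 < α)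
    (pol pol' : S → A → ℝ)
    (hpol0 : ∀ s a, 0 < pol s a) (hpol1 : ∀ s, ∑ a, pol s a = 1)
    (hpol'0 : ∀ s a, 0 < pol' s a) (hpol'1 : ∀ s, ∑ a, pol' s a = 1)
    (Qhp Qhp' : S × A → ℝ)
    (hQhp : ∀ p : S × A, Qhp p = r p + γ * ∑ s' : S, P p s' *
      ∑ a' : A, pol s' a' * (Qhp (s', a') - α * Real.log (pol s' a')))
    (hQhp' : ∀ p : S × A, Qhp' p = r p + γ * ∑ s' : S, P p s' *
      ∑ a' : A, pol' s' a' * (Qhp' (s', a') - α * Real.log (pol' s' a')))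
    (himp : ∀ s : S,
      ∑ a : A, pol s a * (Qhp (s, a) - α * Real.log (pol s a)) ≤
        ∑ a : A, pol' s a * (Qhp (s, a) - α * Real.log (pol' s a))) :
    ∀ p : S × A, Qhp p ≤ Qhp' p := by
  set D : S × A → ℝ := fun p => Qhp p - Qhp' p with hD
  obtain ⟨p0, -, hp0⟩ := Finset.exists_max_image (Finset.univ : Finset (S × A)) D
    ⟨Classical.arbitrary _, Finset.mem_univ _⟩
  set M : ℝ := D p0 with hM
  have hle : ∀ p, D p ≤ M := fun p => hp0 p (Finset.mem_univ p)
  -- key step: D p ≤ γ * M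
  have key : ∀ p : S × A, D p ≤ γ * M := by
    intro p
    have hDp : D p = γ * ∑ s' : S, P p s' *
        ((∑ a' : A, pol s' a' * (Qhp (s', a') - α * Real.log (pol s' a'))) -
         (∑ a' : A, pol' s' a' * (Qhp' (s', a') - α * Real.log (pol' s' a')))) := by
      simp only [hD, hQhp p, hQhp' p, mul_sub, Finset.sum_sub_distrib]
      ring
    rw [hDp]
    have inner : ∀ s' : S,
        (∑ a' : A, pol s' a' * (Qhp (s', a') - α * Real.log (pol s' a'))) -
          (∑ a' : A, pol' s' a' * (Qhp' (s', a') - α * Real.log (pol' s' a'))) ≤ M := by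
      intro s'
      have h1 : (∑ a' : A, pol s' a' * (Qhp (s', a') - α * Real.log (pol s' a'))) -
          (∑ a' : A, pol' s' a' * (Qhp' (s', a') - α * Real.log (pol' s' a'))) ≤
          ∑ a' : A, pol' s' a' * D (s', a') := by
        have := himp s'
        have heq : (∑ a' : A, pol' s' a' * (Qhp (s', a') - α * Real.log (pol' s' a'))) -
            (∑ a' : A, pol' s' a' * (Qhp' (s', a') - α * Real.log (pol' s' a'))) =
            ∑ a' : A, pol' s' a' * D (s', a') := by
          rw [← Finset.sum_sub_distrib]
          apply Finset.sum_congr rfl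
          intro a' _
          simp only [hD]; ring
        linarith
      have h2 : ∑ a' : A, pol' s' a' * D (s', a') ≤ M := by
        calc ∑ a' : A, pol' s' a' * D (s', a') ≤ ∑ a' : A, pol' s' a' * M := by
              apply Finset.sum_le_sum
              intro a' _
              exact mul_le_mul_of_nonneg_left (hle _) (hpol'0 s' a').le
          _ = M := by rw [← Finset.sum_mul, hpol'1 s', one_mul]
      linarith
    have : ∑ s' : S, P p s' *
        ((∑ a' : A, pol s' a' * (Qhp (s', a') - α * Real.log (pol s' a'))) -
         (∑ a' : A, pol' s' a' * (Qhp' (s', a') - α * Real.log (pol' s' a')))) ≤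
        ∑ s' : S, P p s' * M := by
      apply Finset.sum_le_sum
      intro s' _
      exact mul_le_mul_of_nonneg_left (inner s') (hP0 p s')
    have hsum : ∑ s' : S, P p s' * M = M := by rw [← Finset.sum_mul, hP1 p, one_mul]
    calc γ * _ ≤ γ * (∑ s' : S, P p s' * M) := mul_le_mul_of_nonneg_left this hγ0
      _ = γ * M := by rw [hsum]
  have hM0 : M ≤ 0 := by
    have := key p0
    nlinarith
  intro p
  have := le_trans (hle p) hM0
  simp only [hD] at this
  linarith
end
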